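/- Let c > 0 and d > 0. Then lim_{M → ∞} −(1/M) · log( 1 − (1 − erfc(√(c·M/(2d))))^M ) = c/(2d). (This identifies the exponential decay rate of the second term of the first-arrival detector's error probability when the decision threshold approaches Δ at rate d/M, and it underlies the conclusion that the FA error exponent equals −log(1 − erfc(√(c/(2Δ)))).) -/

import Mathlib

open Filter

/-- The complementary error function `erfc x = (2/√π) ∫_x^∞ exp(−u²) du`. -/
noncomputable def erfc (x : ℝ) : ℝ :=
  (2 / Real.sqrt Real.pi) * ∫ u in Set.Ioi x, Real.exp (-u ^ 2)

/-!
With `x = √(cM/(2d))` and `ε = erfc x`, Bernoulli's inequality gives `ε ≤ 1 - (1 - ε)^M ≤ M ε`;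
since `log M / M → 0`, the rate is `lim -log ε / M`. The Gaussian tail bounds
`(2/√π) exp (-(x+1)²) ≤ erfc x ≤ exp (-x²)` (for `x ≥ 1`) give `-log (erfc x) ∼ x² = cM/(2d)`.
-/

open MeasureTheory Set Real Topology

lemma integrableOn_exp_neg_sq (s : Set ℝ) : IntegrableOn (fun u : ℝ => exp (-u ^ 2)) s := by
  simpa using (integrable_exp_neg_mul_sq one_pos).integrableOn

lemma integral_Ioi_mul_exp_neg_sq (x : ℝ) :
    ∫ u in Ioi x, u * exp (-u ^ 2) = exp (-x ^ 2) / 2 := by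
  have hderiv : ∀ u ∈ Ici x, HasDerivAt (fun u : ℝ => -exp (-u ^ 2) / 2) (u * exp (-u ^ 2)) u := by
    intro u _
    refine ((((hasDerivAt_pow 2 u).fun_neg.exp).fun_neg).div_const 2).congr_deriv ?_
    push_cast
    ring
  have hint : IntegrableOn (fun u : ℝ => u * exp (-u ^ 2)) (Ioi x) := by
    simpa using (integrable_mul_exp_neg_mul_sq one_pos).integrableOn
  have hlim : Tendsto (fun u : ℝ => -exp (-u ^ 2) / 2) atTop (𝓝 0) := by
    have hsq : Tendsto (fun u : ℝ => -u ^ 2) atTop atBot :=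
      tendsto_neg_atBot_iff.mpr (tendsto_pow_atTop two_ne_zero)
    simpa using (tendsto_exp_atBot.comp hsq).neg.div_const 2
  rw [integral_Ioi_of_hasDerivAt_of_tendsto' hderiv hint hlim]
  ring

/-- On `u > x` the integrand is at most `(u / x) exp (-u²)`, which integrates in closed form. -/
lemma integral_Ioi_exp_neg_sq_le {x : ℝ} (hx : 0 < x) :
    ∫ u in Ioi x, exp (-u ^ 2) ≤ exp (-x ^ 2) / (2 * x) := by
  have hint : IntegrableOn (fun u : ℝ => u * exp (-u ^ 2) / x) (Ioi x) := by
    simpa using ((integrable_mul_exp_neg_mul_sq one_pos).div_const x).integrableOn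
  calc ∫ u in Ioi x, exp (-u ^ 2)
      ≤ ∫ u in Ioi x, u * exp (-u ^ 2) / x := by
        refine setIntegral_mono_on (integrableOn_exp_neg_sq _) hint measurableSet_Ioi
          fun u hu => ?_
        rw [mul_div_right_comm]
        exact le_mul_of_one_le_left (exp_nonneg _) ((one_le_div hx).mpr (le_of_lt hu))
    _ = exp (-x ^ 2) / (2 * x) := by
        rw [integral_div, integral_Ioi_mul_exp_neg_sq]
        ring

lemma exp_neg_add_one_sq_le_integral_Ioi {x : ℝ} (hx : 0 ≤ x) :
    exp (-(x + 1) ^ 2) ≤ ∫ u in Ioi x, exp (-u ^ 2) := by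
  have hIoc : exp (-(x + 1) ^ 2) ≤ ∫ u in Ioc x (x + 1), exp (-u ^ 2) := by
    have := setIntegral_ge_of_const_le_real (c := exp (-(x + 1) ^ 2)) measurableSet_Ioc
      (by simp) (fun u hu => exp_le_exp.mpr (by nlinarith [hu.1, hu.2]))
      (integrableOn_exp_neg_sq (Ioc x (x + 1)))
    simpa using this
  exact hIoc.trans <| setIntegral_mono_set (integrableOn_exp_neg_sq _)
    (.of_forall fun u => exp_nonneg _) (.of_forall fun u hu => hu.1)

lemma erfc_le_exp_neg_sq {x : ℝ} (hx : 1 ≤ x) : erfc x ≤ exp (-x ^ 2) := by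
  have hpi : 1 ≤ √π := one_le_sqrt.mpr (by linarith [pi_gt_three])
  calc erfc x ≤ 2 / √π * (exp (-x ^ 2) / (2 * x)) :=
        mul_le_mul_of_nonneg_left (integral_Ioi_exp_neg_sq_le (by linarith)) (by positivity)
    _ = exp (-x ^ 2) / (√π * x) := by field_simp
    _ ≤ exp (-x ^ 2) := div_le_self (exp_nonneg _) (one_le_mul_of_one_le_of_one_le hpi hx)

lemma two_div_sqrt_pi_mul_exp_le_erfc {x : ℝ} (hx : 0 ≤ x) :
    2 / √π * exp (-(x + 1) ^ 2) ≤ erfc x :=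
  mul_le_mul_of_nonneg_left (exp_neg_add_one_sq_le_integral_Ioi hx) (by positivity)

lemma erfc_pos {x : ℝ} (hx : 0 ≤ x) : 0 < erfc x :=
  (by positivity : (0 : ℝ) < 2 / √π * exp (-(x + 1) ^ 2)).trans_le
    (two_div_sqrt_pi_mul_exp_le_erfc hx)

lemma sq_le_neg_log_erfc {x : ℝ} (hx : 1 ≤ x) : x ^ 2 ≤ -log (erfc x) := by
  have := log_le_log (erfc_pos (by linarith)) (erfc_le_exp_neg_sq hx)
  rw [log_exp] at this
  linarith

lemma neg_log_erfc_le {x : ℝ} (hx : 0 ≤ x) :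
    -log (erfc x) ≤ (x + 1) ^ 2 - log (2 / √π) := by
  have := log_le_log (by positivity) (two_div_sqrt_pi_mul_exp_le_erfc hx)
  rw [log_mul (by positivity) (exp_ne_zero _), log_exp] at this
  linarith

lemma tendsto_neg_log_erfc_div_sq :
    Tendsto (fun x => -log (erfc x) / x ^ 2) atTop (𝓝 1) := by
  have hupper : Tendsto (fun x : ℝ => (1 + x⁻¹) ^ 2 - log (2 / √π) * x⁻¹ ^ 2) atTop (𝓝 1) := by
    have hinv := tendsto_inv_atTop_zero (𝕜 := ℝ)
    simpa using ((tendsto_const_nhds (x := 1)).add hinv |>.pow 2).sub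
      ((tendsto_const_nhds (x := log (2 / √π))).mul (hinv.pow 2))
  refine tendsto_of_tendsto_of_tendsto_of_le_of_le' tendsto_const_nhds hupper ?_ ?_ <;>
    filter_upwards [eventually_ge_atTop 1] with x hx
  · rw [le_div_iff₀ (by positivity), one_mul]
    exact sq_le_neg_log_erfc hx
  · calc -log (erfc x) / x ^ 2 ≤ ((x + 1) ^ 2 - log (2 / √π)) / x ^ 2 :=
          div_le_div_of_nonneg_right (neg_log_erfc_le (by linarith)) (by positivity)
      _ = (1 + x⁻¹) ^ 2 - log (2 / √π) * x⁻¹ ^ 2 := by field_simp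

lemma le_one_sub_one_sub_pow {ε : ℝ} (h0 : 0 ≤ ε) (h1 : ε ≤ 1) {n : ℕ} (hn : n ≠ 0) :
    ε ≤ 1 - (1 - ε) ^ n := by
  have := pow_le_pow_of_le_one (sub_nonneg.mpr h1) (by linarith) (Nat.one_le_iff_ne_zero.mpr hn)
  rw [pow_one] at this
  linarith

lemma one_sub_one_sub_pow_le {ε : ℝ} (h1 : ε ≤ 1) (n : ℕ) : 1 - (1 - ε) ^ n ≤ n * ε := by
  have := one_add_mul_le_pow (show -2 ≤ -ε by linarith) n
  rw [← sub_eq_add_neg] at this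
  linarith

lemma tendsto_neg_log_one_sub_one_sub_pow {ε : ℕ → ℝ} {a : ℝ}
    (hε : ∀ᶠ n in atTop, 0 < ε n ∧ ε n ≤ 1)
    (h : Tendsto (fun n : ℕ => -log (ε n) / n) atTop (𝓝 a)) :
    Tendsto (fun n : ℕ => -(1 / (n : ℝ)) * log (1 - (1 - ε n) ^ n)) atTop (𝓝 a) := by
  have hlog : Tendsto (fun n : ℕ => log n / (n : ℝ)) atTop (𝓝 0) :=
    isLittleO_log_id_atTop.tendsto_div_nhds_zero.comp tendsto_natCast_atTop_atTop
  have hlower : Tendsto (fun n : ℕ => -log (ε n) / n - log n / n) atTop (𝓝 a) := by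
    simpa using h.sub hlog
  have hbounds : ∀ᶠ n : ℕ in atTop,
      -log (ε n) / n - log n / n ≤ -log (1 - (1 - ε n) ^ n) / n ∧
        -log (1 - (1 - ε n) ^ n) / n ≤ -log (ε n) / n := by
    filter_upwards [hε, eventually_ne_atTop 0] with n ⟨hpos, hle⟩ hn
    have hn' : (0 : ℝ) < n := by positivity
    have hT := le_one_sub_one_sub_pow hpos.le hle hn
    have hlogT := log_le_log (hpos.trans_le hT) (one_sub_one_sub_pow_le hle n)
    rw [log_mul hn'.ne' hpos.ne'] at hlogT
    constructor
    · rw [← sub_div]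
      gcongr
      linarith
    · gcongr
  simp_rw [neg_mul, one_div_mul_eq_div, ← neg_div]
  exact tendsto_of_tendsto_of_tendsto_of_le_of_le' hlower h (hbounds.mono fun _ => And.left)
    (hbounds.mono fun _ => And.right)

/-- Exponential decay rate of the second term of the FA detector's error
probability when the threshold approaches `Δ` at rate `d/M`:
`−(1/M)·log(1 − (1 − erfc(√(cM/(2d))))^M) → c/(2d)` as `M → ∞`. -/
theorem FA_second_term_rate (c d : ℝ) (hc : 0 < c) (hd : 0 < d) :
    Tendsto (fun M : ℕ =>
        -(1 / (M : ℝ)) * Real.log (1 - (1 - erfc (Real.sqrt (c * M / (2 * d)))) ^ M))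
      atTop (nhds (c / (2 * d))) := by
  have hx : Tendsto (fun M : ℕ => √(c * M / (2 * d))) atTop atTop :=
    tendsto_sqrt_atTop.comp <| (tendsto_natCast_atTop_atTop.const_mul_atTop hc).atTop_div_const
      (by positivity)
  refine tendsto_neg_log_one_sub_one_sub_pow ?_ ?_
  · filter_upwards [hx.eventually_ge_atTop 1] with M hM
    refine ⟨erfc_pos (by linarith), (erfc_le_exp_neg_sq hM).trans ?_⟩
    exact exp_le_one_iff.mpr (by nlinarith)
  · have hrate := (tendsto_neg_log_erfc_div_sq.comp hx).const_mul (c / (2 * d))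
    rw [mul_one] at hrate
    refine hrate.congr' ?_
    filter_upwards [eventually_ne_atTop 0] with M hM
    have : (0 : ℝ) < M := by positivity
    simp only [Function.comp_apply, sq_sqrt (by positivity : 0 ≤ c * M / (2 * d))]
    field_simp
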